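/- arXiv:1807.02015 — 2 statements merged into one kernel-verified Lean document; each statement's English description precedes it below -/
import Mathlib

section
/- In the max-plus semiring, if A is an n×n matrix with all entries in [-∞, 0] and α is a vector, then r := A* ⊗ α is the smallest solution of r = A ⊗ r ⊕ α: for any vector r̃ satisfying r̃ = A ⊗ r̃ ⊕ α one has r_i ≤ r̃_i for all i. -/
open Finset

/-- Max-plus matrix-vector product: `(A ⊗ v) i = max_j (A i j + v j)`. -/
def mpMulVec {n : ℕ} (A : Matrix (Fin n) (Fin n) (WithBot ℝ))
    (v : Fin n → WithBot ℝ) : Fin n → WithBot ℝ :=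
  fun i => Finset.univ.sup fun j => A i j + v j

/-- Max-plus matrix-matrix product. -/
def mpMatMul {n : ℕ} (A B : Matrix (Fin n) (Fin n) (WithBot ℝ)) :
    Matrix (Fin n) (Fin n) (WithBot ℝ) :=
  fun i j => Finset.univ.sup fun k => A i k + B k j

/-- The max-plus identity matrix: `0` on the diagonal, `-∞` off the diagonal. -/
def mpId {n : ℕ} : Matrix (Fin n) (Fin n) (WithBot ℝ) :=
  fun i j => if i = j then (0 : WithBot ℝ) else ⊥

/-- Max-plus matrix power. -/
def mpPow {n : ℕ} (A : Matrix (Fin n) (Fin n) (WithBot ℝ)) : ℕ → Matrix (Fin n) (Fin n) (WithBot ℝ)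
  | 0 => mpId
  | k + 1 => mpMatMul A (mpPow A k)

/-- The Kleene star `A* = I ⊕ A ⊕ A² ⊕ ⋯ ⊕ A^{n-1}` in the max-plus semiring. -/
def mpStar {n : ℕ} (A : Matrix (Fin n) (Fin n) (WithBot ℝ)) :
    Matrix (Fin n) (Fin n) (WithBot ℝ) :=
  fun i j => (Finset.range n).sup fun k => mpPow A k i j

/-! A solution `r` of `r = A ⊗ r ⊕ α` satisfies `α ≤ r` and `A ⊗ r ≤ r`; iterating the second
inequality gives `A^k ⊗ α ≤ r` for every `k`, hence `A* ⊗ α ≤ r`. -/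

theorem WithBot.finset_sup_add_le {ι α : Type*} [LinearOrder α] [Add α] {s : Finset ι}
    {f : ι → WithBot α} {c x : WithBot α} (h : ∀ i ∈ s, f i + c ≤ x) : s.sup f + c ≤ x := by
  rcases s.eq_empty_or_nonempty with rfl | hs
  · simp
  · obtain ⟨i, hi, hsup⟩ := s.exists_mem_eq_sup hs f
    exact hsup ▸ h i hi

section SuperSolution

variable {n : ℕ} {A : Matrix (Fin n) (Fin n) (WithBot ℝ)} {α r : Fin n → WithBot ℝ}

theorem mpPow_apply_add_le (hα : α ≤ r) (hAr : mpMulVec A r ≤ r) :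
    ∀ k i j, mpPow A k i j + α j ≤ r i
  | 0, i, j => by
    by_cases hij : i = j
    · subst hij
      simpa [mpPow, mpId] using hα i
    · simp [mpPow, mpId, hij]
  | k + 1, i, j => WithBot.finset_sup_add_le (s := Finset.univ) fun m _ => calc
      A i m + mpPow A k m j + α j = A i m + (mpPow A k m j + α j) := add_assoc ..
      _ ≤ A i m + r m := add_le_add_right (mpPow_apply_add_le hα hAr k m j) _
      _ ≤ mpMulVec A r i := Finset.le_sup (f := fun m => A i m + r m) (Finset.mem_univ m)
      _ ≤ r i := hAr i

theorem mpMulVec_mpStar_le (hα : α ≤ r) (hAr : mpMulVec A r ≤ r) : mpMulVec (mpStar A) α ≤ r :=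
  fun i => Finset.sup_le fun j _ =>
    WithBot.finset_sup_add_le fun k _ => mpPow_apply_add_le hα hAr k i j

end SuperSolution

theorem mpStar_mulVec_smallest_general {n : ℕ}
    (A : Matrix (Fin n) (Fin n) (WithBot ℝ))
    (α : Fin n → WithBot ℝ) (rr : Fin n → WithBot ℝ)
    (hrr : ∀ i, rr i = mpMulVec A rr i ⊔ α i) :
    ∀ i, mpMulVec (mpStar A) α i ≤ rr i :=
  mpMulVec_mpStar_le (fun i => (hrr i).symm ▸ le_sup_right) (fun i => (hrr i).symm ▸ le_sup_left)

/-- If all entries of `A` are in `[-∞, 0]`, then `r := A* ⊗ α` is the smallest solution of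
`r = A ⊗ r ⊕ α`: any solution `rr` dominates it componentwise. -/
theorem mpStar_mulVec_smallest {n : ℕ} (hn : 0 < n)
    (A : Matrix (Fin n) (Fin n) (WithBot ℝ)) (hA : ∀ i j, A i j ≤ 0)
    (α : Fin n → WithBot ℝ) (rr : Fin n → WithBot ℝ)
    (hrr : ∀ i, rr i = mpMulVec A rr i ⊔ α i) :
    ∀ i, mpMulVec (mpStar A) α i ≤ rr i :=
  mpStar_mulVec_smallest_general A α rr hrr
end

section
/- In the max-plus semiring, if A is an n×n matrix with all entries strictly negative (in [-∞, 0)), then the equation r = A ⊗ r ⊕ α has a unique solution r = A* ⊗ α. -/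
/-!
A solution `r` dominates every `A^k ⊗ α`, hence `A* ⊗ α`, and iterating the equation gives
`r ≤ A^k ⊗ r ⊕ A* ⊗ α` for all `k`. The entries of `A` are bounded by a real `c < 0`, so
`A^k ⊗ r` drops below any real number as `k` grows, which forces `r ≤ A* ⊗ α`.
That `A* ⊗ α` is itself a solution rests on `A^m ≤ A*` for every `m`: `(A^m)_{ij}` is the weight
of a heaviest walk of length `m` from `i` to `j`, a walk of length `≥ n` repeats a vertex, and
cutting out the closed walk between the repeats does not decrease the weight, since all entries
are `≤ 0`.
-/

open Finset

lemma WithBot.add_finset_sup {α β : Type*} [LinearOrder α] [Add α] [AddLeftMono α]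
    (c : WithBot α) (s : Finset β) (f : β → WithBot α) :
    c + s.sup f = s.sup fun x => c + f x :=
  apply_sup_eq_sup_comp (c + ·) (fun _ _ => (max_add_add_left _ _ _).symm) (WithBot.add_bot c)

lemma WithBot.finset_sup_add {α β : Type*} [LinearOrder α] [Add α] [AddRightMono α]
    (c : WithBot α) (s : Finset β) (f : β → WithBot α) :
    s.sup f + c = s.sup fun x => f x + c :=
  apply_sup_eq_sup_comp (· + c) (fun _ _ => (max_add_add_right _ _ _).symm) (WithBot.bot_add c)

section

variable {n : ℕ}

lemma mpMulVec_mono (A : Matrix (Fin n) (Fin n) (WithBot ℝ)) : Monotone (mpMulVec A) :=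
  fun _ _ h _ => sup_mono_fun fun j _ => add_le_add_right (h j) _

lemma mpMulVec_mono_left {A B : Matrix (Fin n) (Fin n) (WithBot ℝ)} (h : ∀ i j, A i j ≤ B i j)
    (v : Fin n → WithBot ℝ) : mpMulVec A v ≤ mpMulVec B v :=
  fun i => sup_mono_fun fun j _ => add_le_add_left (h i j) _

lemma mpMulVec_sup (A : Matrix (Fin n) (Fin n) (WithBot ℝ)) (u v : Fin n → WithBot ℝ) :
    mpMulVec A (u ⊔ v) = mpMulVec A u ⊔ mpMulVec A v := by
  ext i
  simp only [mpMulVec, Pi.sup_apply, ← max_add_add_left]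
  exact sup_sup

lemma mpId_mulVec (v : Fin n → WithBot ℝ) : mpMulVec mpId v = v := by
  ext i
  refine le_antisymm (Finset.sup_le fun j _ => ?_) ?_
  · by_cases h : i = j <;> simp [mpId, h]
  · calc v i = mpId i i + v i := by simp [mpId]
      _ ≤ _ := le_sup (f := fun j => mpId i j + v j) (mem_univ i)

lemma mpMatMul_mulVec (A B : Matrix (Fin n) (Fin n) (WithBot ℝ)) (v : Fin n → WithBot ℝ) :
    mpMulVec (mpMatMul A B) v = mpMulVec A (mpMulVec B v) := by
  ext i
  simp only [mpMulVec, mpMatMul, WithBot.finset_sup_add, WithBot.add_finset_sup, add_assoc]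
  exact Finset.sup_comm _ _ _

lemma mpPow_succ_mulVec (A : Matrix (Fin n) (Fin n) (WithBot ℝ)) (k : ℕ)
    (v : Fin n → WithBot ℝ) :
    mpMulVec (mpPow A (k + 1)) v = mpMulVec A (mpMulVec (mpPow A k) v) :=
  mpMatMul_mulVec A (mpPow A k) v

lemma mpStar_mulVec (A : Matrix (Fin n) (Fin n) (WithBot ℝ)) (v : Fin n → WithBot ℝ) :
    mpMulVec (mpStar A) v = (range n).sup fun k => mpMulVec (mpPow A k) v := by
  ext i
  simp only [mpMulVec, mpStar, WithBot.finset_sup_add, Finset.sup_apply]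
  exact Finset.sup_comm _ _ _

lemma mpMulVec_bot (A : Matrix (Fin n) (Fin n) (WithBot ℝ)) : mpMulVec A ⊥ = ⊥ := by
  ext i
  simp [mpMulVec]

lemma mpMulVec_finset_sup {β : Type*} (A : Matrix (Fin n) (Fin n) (WithBot ℝ)) (s : Finset β)
    (f : β → Fin n → WithBot ℝ) :
    mpMulVec A (s.sup f) = s.sup fun k => mpMulVec A (f k) :=
  apply_sup_eq_sup_comp (mpMulVec A) (mpMulVec_sup A) (mpMulVec_bot A)

end

section Walks

variable {n : ℕ} (A : Matrix (Fin n) (Fin n) (WithBot ℝ))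

-- A walk of length `m` is a sequence `v : ℕ → Fin n` of which only `v 0, …, v m` matter.
def walkWeight (v : ℕ → Fin n) (m : ℕ) : WithBot ℝ :=
  ∑ t ∈ range m, A (v t) (v (t + 1))

lemma walkWeight_succ (v : ℕ → Fin n) (m : ℕ) :
    walkWeight A v (m + 1) = A (v 0) (v 1) + walkWeight A (fun t => v (t + 1)) m := by
  rw [walkWeight, sum_range_succ', add_comm]
  rfl

lemma walkWeight_add (v : ℕ → Fin n) (a m : ℕ) :
    walkWeight A v (a + m) = walkWeight A v a + walkWeight A (fun t => v (a + t)) m := by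
  simp only [walkWeight, sum_range_add, add_assoc]

lemma walkWeight_le_mpPow (v : ℕ → Fin n) (m : ℕ) :
    walkWeight A v m ≤ mpPow A m (v 0) (v m) := by
  induction m generalizing v with
  | zero => simp [walkWeight, mpPow, mpId]
  | succ m ih =>
    rw [walkWeight_succ]
    calc A (v 0) (v 1) + walkWeight A (fun t => v (t + 1)) m
        ≤ A (v 0) (v 1) + mpPow A m (v 1) (v (m + 1)) := add_le_add_right (ih _) _
      _ ≤ _ := le_sup (f := fun k => A (v 0) k + mpPow A m k (v (m + 1))) (mem_univ (v 1))

lemma exists_walkWeight_eq_mpPow {m : ℕ} {i j : Fin n} (h : mpPow A m i j ≠ ⊥) :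
    ∃ v : ℕ → Fin n, v 0 = i ∧ v m = j ∧ walkWeight A v m = mpPow A m i j := by
  induction m generalizing i with
  | zero =>
    have hij : i = j := by by_contra hij; simp [mpPow, mpId, hij] at h
    exact ⟨fun _ => i, rfl, hij, by simp [walkWeight, mpPow, mpId, hij]⟩
  | succ m ih =>
    obtain ⟨k, -, hk⟩ := exists_mem_eq_sup (univ : Finset (Fin n)) ⟨i, mem_univ i⟩
      fun k => A i k + mpPow A m k j
    change (univ : Finset (Fin n)).sup (fun k => A i k + mpPow A m k j) ≠ ⊥ at h
    rw [hk] at h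
    obtain ⟨w, hw0, hwm, hw⟩ := ih (WithBot.add_ne_bot.1 h).2
    refine ⟨fun | 0 => i | t + 1 => w t, rfl, hwm, ?_⟩
    rw [walkWeight_succ]
    show A i (w 0) + walkWeight A w m = mpPow A (m + 1) i j
    rw [hw0, hw]
    exact hk.symm

lemma exists_walkWeight_ge_of_cycle (hA : ∀ i j, A i j ≤ 0) {v : ℕ → Fin n} {a d : ℕ}
    (hv : v a = v (a + d)) (e : ℕ) :
    ∃ w : ℕ → Fin n, w 0 = v 0 ∧ w (a + e) = v (a + d + e) ∧
      walkWeight A v (a + d + e) ≤ walkWeight A w (a + e) := by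
  set w : ℕ → Fin n := fun t => if t < a then v t else v (t + d)
  have hprefix : walkWeight A w a = walkWeight A v a := by
    refine sum_congr rfl fun t ht => ?_
    have ht : t < a := mem_range.1 ht
    by_cases ht' : t + 1 < a
    · simp only [w, if_pos ht, if_pos ht']
    · simp only [w, if_pos ht, show t + 1 = a by omega, lt_irrefl, if_false, ← hv]
  have hsuffix : (fun t => w (a + t)) = fun t => v (a + d + t) := by
    ext t
    simp only [w, if_neg (show ¬ a + t < a by omega), show a + t + d = a + d + t by omega]
  have hcycle : walkWeight A (fun t => v (a + t)) d ≤ 0 := sum_nonpos fun _ _ => hA _ _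
  refine ⟨w, ?_, by simp only [w, if_neg (show ¬ a + e < a by omega),
    show a + e + d = a + d + e by omega], ?_⟩
  · rcases Nat.eq_zero_or_pos a with rfl | ha
    · simp [w, hv]
    · simp [w, ha]
  · rw [walkWeight_add A v (a + d), walkWeight_add A v a, walkWeight_add A w, hprefix, hsuffix]
    exact add_le_add_left (add_le_of_nonpos_right hcycle) _

lemma exists_lt_le_apply_eq (v : ℕ → Fin n) : ∃ a b, a < b ∧ b ≤ n ∧ v a = v b := by
  obtain ⟨s, t, hst, hv⟩ :=
    Fintype.exists_ne_map_eq_of_card_lt (fun t : Fin (n + 1) => v t) (by simp)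
  rcases lt_or_gt_of_ne hst with h | h
  · exact ⟨s, t, h, Nat.lt_succ_iff.1 t.isLt, hv⟩
  · exact ⟨t, s, h, Nat.lt_succ_iff.1 s.isLt, hv.symm⟩

lemma mpPow_le_mpStar (hA : ∀ i j, A i j ≤ 0) (m : ℕ) (i j : Fin n) :
    mpPow A m i j ≤ mpStar A i j := by
  induction m using Nat.strong_induction_on generalizing i j with
  | _ m ih =>
    rcases lt_or_ge m n with hm | hm
    · exact le_sup (f := fun k => mpPow A k i j) (mem_range.2 hm)
    rcases eq_or_ne (mpPow A m i j) ⊥ with h | h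
    · exact h ▸ bot_le
    obtain ⟨v, rfl, rfl, hv⟩ := exists_walkWeight_eq_mpPow A h
    obtain ⟨a, b, hab, hbn, hvab⟩ := exists_lt_le_apply_eq v
    obtain ⟨d, rfl⟩ := Nat.exists_eq_add_of_lt hab
    obtain ⟨e, rfl⟩ := Nat.exists_eq_add_of_le (hbn.trans hm)
    obtain ⟨w, hw0, hwe, hvw⟩ := exists_walkWeight_ge_of_cycle A hA (d := d + 1) hvab e
    calc mpPow A _ (v 0) (v _) = walkWeight A v (a + (d + 1) + e) := hv.symm
      _ ≤ walkWeight A w (a + e) := hvw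
      _ ≤ mpPow A (a + e) (w 0) (w (a + e)) := walkWeight_le_mpPow A w _
      _ ≤ mpStar A (w 0) (w (a + e)) := ih _ (by omega) _ _
      _ = _ := by rw [hw0, hwe, ← add_assoc]

end Walks

section

variable {n : ℕ} {A : Matrix (Fin n) (Fin n) (WithBot ℝ)}

lemma mpStar_mulVec_eq (hA : ∀ i j, A i j ≤ 0) (α : Fin n → WithBot ℝ) :
    mpMulVec (mpStar A) α = mpMulVec A (mpMulVec (mpStar A) α) ⊔ α := by
  have hpow (k : ℕ) : mpMulVec (mpPow A k) α ≤ mpMulVec (mpStar A) α :=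
    mpMulVec_mono_left (mpPow_le_mpStar A hA k) α
  refine le_antisymm ((mpStar_mulVec A α).trans_le (Finset.sup_le fun k _ => ?_)) (sup_le ?_ ?_)
  · cases k with
    | zero => exact (mpId_mulVec α).trans_le le_sup_right
    | succ k =>
      exact (mpPow_succ_mulVec A k α).trans_le (le_sup_of_le_left (mpMulVec_mono A (hpow k)))
  · calc mpMulVec A (mpMulVec (mpStar A) α)
        = (range n).sup fun k => mpMulVec A (mpMulVec (mpPow A k) α) := by
          rw [mpStar_mulVec, mpMulVec_finset_sup]
      _ ≤ mpMulVec (mpStar A) α :=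
          Finset.sup_le fun k _ => (mpPow_succ_mulVec A k α).symm.trans_le (hpow (k + 1))
  · exact (mpId_mulVec α).symm.trans_le (hpow 0)

lemma mpStar_mulVec_le {α r : Fin n → WithBot ℝ} (hr : mpMulVec A r ⊔ α ≤ r) :
    mpMulVec (mpStar A) α ≤ r := by
  have hpow (k : ℕ) : mpMulVec (mpPow A k) α ≤ r := by
    induction k with
    | zero => exact (mpId_mulVec α).trans_le (le_sup_right.trans hr)
    | succ k ih =>
      exact (mpPow_succ_mulVec A k α).trans_le ((mpMulVec_mono A ih).trans (le_sup_left.trans hr))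
  rw [mpStar_mulVec]
  exact Finset.sup_le fun k _ => hpow k

lemma le_mpPow_mulVec_sup {r x : Fin n → WithBot ℝ} (hr : r ≤ mpMulVec A r ⊔ x)
    (hx : mpMulVec A x ≤ x) (k : ℕ) : r ≤ mpMulVec (mpPow A k) r ⊔ x := by
  induction k with
  | zero => exact (mpId_mulVec r).symm.trans_le le_sup_left
  | succ k ih =>
    calc r ≤ mpMulVec A r ⊔ x := hr
      _ ≤ mpMulVec A (mpMulVec (mpPow A k) r ⊔ x) ⊔ x := sup_le_sup_right (mpMulVec_mono A ih) x
      _ = mpMulVec (mpPow A (k + 1)) r ⊔ (mpMulVec A x ⊔ x) := by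
          rw [mpMulVec_sup, mpPow_succ_mulVec, sup_assoc]
      _ = mpMulVec (mpPow A (k + 1)) r ⊔ x := by rw [sup_eq_right.2 hx]

lemma mpPow_mulVec_le {v : Fin n → WithBot ℝ} {c M : ℝ} (hA : ∀ i j, A i j ≤ c)
    (hv : ∀ j, v j ≤ M) (k : ℕ) (i : Fin n) :
    mpMulVec (mpPow A k) v i ≤ ((k * c + M : ℝ) : WithBot ℝ) := by
  induction k generalizing i with
  | zero => simpa [mpPow, mpId_mulVec] using hv i
  | succ k ih =>
    rw [mpPow_succ_mulVec]
    refine Finset.sup_le fun j _ => ?_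
    calc A i j + mpMulVec (mpPow A k) v j ≤ (c : WithBot ℝ) + ((k * c + M : ℝ) : WithBot ℝ) :=
          add_le_add (hA i j) (ih j)
      _ = (((k + 1 : ℕ) : ℝ) * c + M : ℝ) := by
          rw [← WithBot.coe_add]
          congr 1
          push_cast
          ring

lemma exists_mpPow_mulVec_lt (hA : ∀ i j, A i j < 0) (v : Fin n → WithBot ℝ) (ρ : ℝ) :
    ∃ k : ℕ, ∀ i, mpMulVec (mpPow A k) v i < ρ := by
  -- `c` is the largest entry of `A`, or `-1` if all entries are `⊥`.
  set c := ((univ : Finset (Fin n × Fin n)).sup fun p => A p.1 p.2).unbotD (-1)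
  set M := (univ.sup v).unbotD 0
  have hc : c < 0 :=
    (WithBot.unbotD_lt_iff fun _ => neg_one_lt_zero).2
      ((Finset.sup_lt_iff (WithBot.bot_lt_coe 0)).2 fun p _ => hA p.1 p.2)
  have hAc (i j : Fin n) : A i j ≤ c :=
    (le_sup (f := fun p : Fin n × Fin n => A p.1 p.2) (mem_univ (i, j))).trans
      (WithBot.le_coe_unbotD _ _)
  have hvM (j : Fin n) : v j ≤ M := (le_sup (mem_univ j)).trans (WithBot.le_coe_unbotD _ _)
  obtain ⟨k, hk⟩ := exists_nat_gt ((M - ρ) / -c)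
  refine ⟨k, fun i => (mpPow_mulVec_le hAc hvM k i).trans_lt (WithBot.coe_lt_coe.2 ?_)⟩
  rw [div_lt_iff₀ (neg_pos.2 hc)] at hk
  linarith

lemma le_of_forall_le_mpPow_mulVec_sup (hA : ∀ i j, A i j < 0) {r x : Fin n → WithBot ℝ}
    (h : ∀ k, r ≤ mpMulVec (mpPow A k) r ⊔ x) : r ≤ x := by
  intro i
  by_cases hri : r i = ⊥
  · exact hri ▸ bot_le
  obtain ⟨ρ, hρ⟩ := WithBot.ne_bot_iff_exists.1 hri
  obtain ⟨k, hk⟩ := exists_mpPow_mulVec_lt hA r ρ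
  refine (le_sup_iff.1 (h k i)).resolve_left fun hle => ?_
  exact (hle.trans_lt (hk i)).ne hρ.symm

end

theorem mpStar_mulVec_unique_general {n : ℕ}
    (A : Matrix (Fin n) (Fin n) (WithBot ℝ)) (hA : ∀ i j, A i j < 0)
    (α : Fin n → WithBot ℝ) :
    (∀ i, mpMulVec (mpStar A) α i = mpMulVec A (mpMulVec (mpStar A) α) i ⊔ α i) ∧
      ∀ r : Fin n → WithBot ℝ, (∀ i, r i = mpMulVec A r i ⊔ α i) →
        r = mpMulVec (mpStar A) α := by
  have hx := mpStar_mulVec_eq (fun i j => (hA i j).le) α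
  refine ⟨congrFun hx, fun r hr => ?_⟩
  have hr : r = mpMulVec A r ⊔ α := funext hr
  refine le_antisymm (le_of_forall_le_mpPow_mulVec_sup hA fun k => ?_) (mpStar_mulVec_le hr.ge)
  refine le_mpPow_mulVec_sup ?_ (le_sup_left.trans hx.ge) k
  exact hr.trans_le (sup_le_sup_left (le_sup_right.trans hx.ge) _)

/-- If all entries of `A` are strictly negative (possibly `-∞`), then the equation
`r = A ⊗ r ⊕ α` has a unique solution, namely `r = A* ⊗ α`. -/
theorem mpStar_mulVec_unique {n : ℕ} (hn : 0 < n)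
    (A : Matrix (Fin n) (Fin n) (WithBot ℝ)) (hA : ∀ i j, A i j < 0)
    (α : Fin n → WithBot ℝ) :
    (∀ i, mpMulVec (mpStar A) α i = mpMulVec A (mpMulVec (mpStar A) α) i ⊔ α i) ∧
      ∀ r : Fin n → WithBot ℝ, (∀ i, r i = mpMulVec A r i ⊔ α i) →
        r = mpMulVec (mpStar A) α :=
  mpStar_mulVec_unique_general A hA α
end
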